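/- With H(ζ) = Σ_{m>0, k∤m} A_m ζ^m holomorphic near the closed disc of radius 2, k ≥ 2, λ ∈ ℂ*, and F_n defined by F_n(ζ) = Σ_{0≤j<n} λ^{−j−1} (H(ζ^{k^j}) − H(ζ^{k^j} e^{−2πi k^{j−n}})): for every ν ≥ 1 with k ∤ ν and every n ≥ 1, the Taylor coefficient of F_n at index ν k^{n−1} equals λ^{−n} A_ν (1 − exp(−2πiν/k)). In particular, |F̂_n(ν k^{n−1})| ≥ |λ|^{−n} |A_ν| / k when A_ν ≠ 0. -/

import Mathlib

/-- `G_{n,j}(ζ) = H(ζ^{k^j}) − H(ζ^{k^j} exp(−2πi k^{j−n}))`. -/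
noncomputable def Gfun (H : ℂ → ℂ) (k n j : ℕ) (ζ : ℂ) : ℂ :=
  H (ζ ^ k ^ j) -
    H (ζ ^ k ^ j * Complex.exp (-2 * Real.pi * Complex.I / (k:ℂ) ^ (n - j)))

/-- `F_n(ζ) = Σ_{0 ≤ j < n} λ^{−j−1} G_{n,j}(ζ)`. -/
noncomputable def Ffun (H : ℂ → ℂ) (k : ℕ) (lam : ℂ) (n : ℕ) (ζ : ℂ) : ℂ :=
  ∑ j ∈ Finset.range n, lam⁻¹ ^ (j + 1) * Gfun H k n j ζ

/-!
Expanding `H(ζ^{k^j}) − H(ζ^{k^j} w)` as `Σ_m A_m (1 − w^m) ζ^{m k^j}` shows that the Taylor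
coefficient of `F_n` at `s` collects, over the `j < n` with `k^j ∣ s`, the terms
`λ^{−j−1} A_{s/k^j} (1 − w_j^{s/k^j})`. At `s = ν k^{n−1}` with `k ∤ ν` every `j < n − 1` gives
an index `s / k^j` divisible by `k`, where `A` vanishes, so only `j = n − 1` survives; uniqueness
of Taylor coefficients identifies `B n` with these coefficients.

For the lower bound, `z = exp(−2πiν/k)` is a `k`-th root of unity other than `1`, so
`k = Σ_{j<k} (1 − z^j)`, and `|1 − z^j| ≤ j |1 − z|` gives `|1 − z| ≥ 1/k`.
-/

open Complex Finset

theorem hasFPowerSeriesOnBall_ofScalars_of_hasSum {a : ℕ → ℂ} {f : ℂ → ℂ} {r : ℝ}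
    (hr : 0 < r) (ha : ∀ ζ : ℂ, ‖ζ‖ < r → HasSum (fun s => a s * ζ ^ s) (f ζ)) :
    HasFPowerSeriesOnBall f (.ofScalars ℂ a) 0 (ENNReal.ofReal r) := by
  refine ⟨ENNReal.le_of_forall_nnreal_lt fun t ht => ?_, ENNReal.ofReal_pos.2 hr, fun {y} hy => ?_⟩
  · have ht' : ‖((t : ℝ) : ℂ)‖ < r := by
      rwa [Complex.norm_real, Real.norm_eq_abs, NNReal.abs_eq, ← ENNReal.ofReal_lt_ofReal_iff hr,
        ENNReal.ofReal_coe_nnreal]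
    apply FormalMultilinearSeries.le_radius_of_summable
    simpa [FormalMultilinearSeries.ofScalars_norm] using (ha _ ht').summable.norm
  · have hy' : ‖y‖ < r := by
      rwa [Metric.mem_eball, edist_zero_right, ← ofReal_norm, ENNReal.ofReal_lt_ofReal_iff hr] at hy
    simpa [FormalMultilinearSeries.ofScalars_apply_eq, mul_comm] using ha y hy'

theorem eq_of_hasSum_pow_mul {a b : ℕ → ℂ} {f : ℂ → ℂ} {r : ℝ} (hr : 0 < r)
    (ha : ∀ ζ : ℂ, ‖ζ‖ < r → HasSum (fun s => a s * ζ ^ s) (f ζ))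
    (hb : ∀ ζ : ℂ, ‖ζ‖ < r → HasSum (fun s => b s * ζ ^ s) (f ζ)) : a = b :=
  (FormalMultilinearSeries.ofScalars_series_eq_iff ℂ a b).mp <|
    (hasFPowerSeriesOnBall_ofScalars_of_hasSum hr ha).hasFPowerSeriesAt.eq_formalMultilinearSeries
      (hasFPowerSeriesOnBall_ofScalars_of_hasSum hr hb).hasFPowerSeriesAt

theorem norm_one_sub_pow_le {z : ℂ} (hz : ‖z‖ ≤ 1) (j : ℕ) : ‖1 - z ^ j‖ ≤ j * ‖1 - z‖ := by
  induction j with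
  | zero => simp
  | succ j ih =>
    calc ‖1 - z ^ (j + 1)‖ = ‖(1 - z ^ j) + z ^ j * (1 - z)‖ := by ring_nf
      _ ≤ ‖1 - z ^ j‖ + ‖z‖ ^ j * ‖1 - z‖ := by grw [norm_add_le, norm_mul, norm_pow]
      _ ≤ j * ‖1 - z‖ + 1 * ‖1 - z‖ := by gcongr; exact pow_le_one₀ (norm_nonneg z) hz
      _ = (j + 1 : ℕ) * ‖1 - z‖ := by push_cast; ring

theorem inv_le_norm_one_sub_of_pow_eq_one {k : ℕ} {z : ℂ} (hzk : z ^ k = 1) (hz : z ≠ 1) :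
    (k : ℝ)⁻¹ ≤ ‖1 - z‖ := by
  rcases eq_or_ne k 0 with rfl | hk
  · simp
  have hnorm : ‖z‖ = 1 := norm_eq_one_of_pow_eq_one hzk hk
  have hsum : (k : ℂ) = ∑ j ∈ range k, (1 - z ^ j) := by
    simp [sum_sub_distrib, geom_sum_eq hz, hzk]
  have hk' : (0 : ℝ) < k := by positivity
  have hk_le : (k : ℝ) ≤ k * (‖1 - z‖ * k) :=
    calc (k : ℝ) = ‖∑ j ∈ range k, (1 - z ^ j)‖ := by rw [← hsum, norm_natCast]
      _ ≤ ∑ j ∈ range k, ‖1 - z ^ j‖ := norm_sum_le _ _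
      _ ≤ ∑ j ∈ range k, ‖1 - z‖ * k := by
        gcongr with j hj
        grw [norm_one_sub_pow_le hnorm.le j, (mem_range.mp hj).le, mul_comm]
      _ = k * (‖1 - z‖ * k) := by simp
  rw [inv_le_iff_one_le_mul₀ hk']
  exact (le_mul_iff_one_le_right hk').mp hk_le

theorem inv_le_norm_one_sub_exp {k ν : ℕ} (hkν : ¬ k ∣ ν) :
    (k : ℝ)⁻¹ ≤ ‖1 - exp (-2 * Real.pi * I * ν / k)‖ := by
  rcases eq_or_ne k 0 with rfl | hk
  · simp
  have hζ := isPrimitiveRoot_exp k hk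
  have hz : exp (-2 * Real.pi * I * ν / k) = exp (2 * Real.pi * I / k) ^ (-(ν : ℤ)) := by
    rw [← exp_int_mul]; congr 1; push_cast; ring
  refine inv_le_norm_one_sub_of_pow_eq_one ?_ ?_ <;> rw [hz]
  · rw [← zpow_natCast, ← zpow_mul, hζ.zpow_eq_one_iff_dvd]
    exact dvd_mul_left _ _
  · rwa [Ne, hζ.zpow_eq_one_iff_dvd, Int.dvd_neg, Int.natCast_dvd_natCast]

def expandCoeff (q : ℕ) (a : ℕ → ℂ) (s : ℕ) : ℂ := if q ∣ s then a (s / q) else 0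

theorem expandCoeff_mul_self {q : ℕ} (hq : q ≠ 0) (a : ℕ → ℂ) (m : ℕ) :
    expandCoeff q a (m * q) = a m := by
  simp [expandCoeff, Nat.mul_div_cancel m (Nat.pos_of_ne_zero hq)]

theorem hasSum_expandCoeff {q : ℕ} (hq : q ≠ 0) {a : ℕ → ℂ} {ζ y : ℂ}
    (h : HasSum (fun m => a m * (ζ ^ q) ^ m) y) :
    HasSum (fun s => expandCoeff q a s * ζ ^ s) y := by
  have hinj : Function.Injective (· * q) := fun _ _ => (Nat.mul_left_inj hq).mp
  refine (hinj.hasSum_iff fun s hs => ?_).mp ?_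
  · rw [expandCoeff, if_neg fun ⟨m, hm⟩ => hs ⟨m, by rw [hm, mul_comm]⟩, zero_mul]
  · convert h using 2 with m
    rw [Function.comp_apply, expandCoeff_mul_self hq, ← pow_mul, mul_comm q]

theorem expandCoeff_pow_mul_pow_eq_zero {k i j : ℕ} (hji : j < i) {a : ℕ → ℂ}
    (ha : ∀ m, k ∣ m → a m = 0) (ν : ℕ) : expandCoeff (k ^ j) a (ν * k ^ i) = 0 := by
  unfold expandCoeff
  split_ifs
  · refine ha _ (Nat.dvd_div_of_mul_dvd ?_)
    rw [← pow_succ]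
    exact (pow_dvd_pow k hji).mul_left ν
  · rfl

theorem hasSum_Gfun {A : ℕ → ℂ} {H : ℂ → ℂ}
    (hH : ∀ ζ : ℂ, ‖ζ‖ < 1 → HasSum (fun m => A m * ζ ^ m) (H ζ)) {k : ℕ} (hk : k ≠ 0)
    (n j : ℕ) {ζ : ℂ} (hζ : ‖ζ‖ < 1) :
    HasSum (fun s => expandCoeff (k ^ j)
        (fun m => A m * (1 - exp (-2 * Real.pi * I / (k : ℂ) ^ (n - j)) ^ m)) s * ζ ^ s)
      (Gfun H k n j ζ) := by
  have hw : ‖exp (-2 * Real.pi * I / (k : ℂ) ^ (n - j))‖ = 1 := by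
    rw [show -2 * Real.pi * I / (k : ℂ) ^ (n - j) = ((-2 * Real.pi / k ^ (n - j) : ℝ) : ℂ) * I by
      push_cast; ring]
    exact norm_exp_ofReal_mul_I _
  have hx : ‖ζ ^ k ^ j‖ < 1 := by
    rw [norm_pow]
    exact pow_lt_one₀ (norm_nonneg ζ) hζ (pow_ne_zero j hk)
  have hxw : ‖ζ ^ k ^ j * exp (-2 * Real.pi * I / (k : ℂ) ^ (n - j))‖ < 1 := by
    rwa [norm_mul, hw, mul_one]
  exact hasSum_expandCoeff (pow_ne_zero j hk) <|
    ((hH _ hx).sub (hH _ hxw)).congr_fun fun m => by ring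

noncomputable def Fcoeff (A : ℕ → ℂ) (k : ℕ) (lam : ℂ) (n s : ℕ) : ℂ :=
  ∑ j ∈ range n, lam⁻¹ ^ (j + 1) *
    expandCoeff (k ^ j) (fun m => A m * (1 - exp (-2 * Real.pi * I / (k : ℂ) ^ (n - j)) ^ m)) s

theorem hasSum_Fcoeff {A : ℕ → ℂ} {H : ℂ → ℂ}
    (hH : ∀ ζ : ℂ, ‖ζ‖ < 1 → HasSum (fun m => A m * ζ ^ m) (H ζ)) {k : ℕ} (hk : k ≠ 0)
    (lam : ℂ) (n : ℕ) {ζ : ℂ} (hζ : ‖ζ‖ < 1) :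
    HasSum (fun s => Fcoeff A k lam n s * ζ ^ s) (Ffun H k lam n ζ) := by
  have h := hasSum_sum fun j (_ : j ∈ range n) =>
    (hasSum_Gfun hH hk n j hζ).mul_left (lam⁻¹ ^ (j + 1))
  simp only [Fcoeff, Ffun, sum_mul, mul_assoc] at h ⊢
  exact h

theorem Fcoeff_mul_pow_pred {A : ℕ → ℂ} {k : ℕ} (hk : k ≠ 0) (hA : ∀ m, k ∣ m → A m = 0)
    (lam : ℂ) {n : ℕ} (hn : 1 ≤ n) (ν : ℕ) :
    Fcoeff A k lam n (ν * k ^ (n - 1)) =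
      lam⁻¹ ^ n * A ν * (1 - exp (-2 * Real.pi * I * ν / k)) := by
  have hA' (j : ℕ) : ∀ m, k ∣ m →
      A m * (1 - exp (-2 * Real.pi * I / (k : ℂ) ^ (n - j)) ^ m) = 0 := fun m hm => by
    rw [hA m hm, zero_mul]
  rw [Fcoeff, sum_eq_single_of_mem (n - 1) (mem_range.mpr (by omega)) fun j hj hjn => by
    rw [expandCoeff_pow_mul_pow_eq_zero (by grind) (hA' j), mul_zero]]
  have hexp : exp (-2 * Real.pi * I / k) ^ ν = exp (-2 * Real.pi * I * ν / k) := by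
    rw [← exp_nat_mul]
    ring_nf
  rw [expandCoeff_mul_self (pow_ne_zero _ hk), Nat.sub_add_cancel hn, Nat.sub_sub_self hn,
    pow_one, hexp, ← mul_assoc]

theorem F_coefficient_formula_general (k : ℕ) (hk : 2 ≤ k) (lam : ℂ)
    (A : ℕ → ℂ) (hA : ∀ m : ℕ, k ∣ m → A m = 0)
    (H : ℂ → ℂ) (hH : ∀ ζ : ℂ, ‖ζ‖ < 1 → HasSum (fun m : ℕ => A m * ζ ^ m) (H ζ))
    (r : ℝ) (hr0 : 0 < r) (hr1 : r < 1)
    (B : ℕ → ℕ → ℂ)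
    (hB : ∀ n : ℕ, ∀ ζ : ℂ, ‖ζ‖ < r →
      HasSum (fun s : ℕ => B n s * ζ ^ s) (Ffun H k lam n ζ)) :
    ∀ ν : ℕ, 1 ≤ ν → ¬ (k ∣ ν) → ∀ n : ℕ, 1 ≤ n →
      B n (ν * k ^ (n - 1)) =
        lam⁻¹ ^ n * A ν * (1 - Complex.exp (-2 * Real.pi * Complex.I * ν / k)) ∧
      (‖lam‖)⁻¹ ^ n * ‖A ν‖ / k ≤
        ‖B n (ν * k ^ (n - 1))‖ := by
  intro ν _ hkν n hn
  have hk0 : k ≠ 0 := by omega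
  have hBn : B n = Fcoeff A k lam n :=
    eq_of_hasSum_pow_mul hr0 (hB n) fun ζ hζ => hasSum_Fcoeff hH hk0 lam n (hζ.trans hr1)
  have hval := (congrFun hBn _).trans (Fcoeff_mul_pow_pred hk0 hA lam hn ν)
  refine ⟨hval, ?_⟩
  rw [hval, norm_mul, norm_mul, norm_pow, norm_inv, div_eq_mul_inv]
  exact mul_le_mul_of_nonneg_left (inv_le_norm_one_sub_exp hkν) (by positivity)

/-- Lemma 4.8: with `H(ζ) = Σ_{m>0, k∤m} A_m ζ^m` and `B n s` the `s`-th Taylor coefficient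
of `F_n` at `0`, for every `ν ≥ 1` with `k ∤ ν` and every `n ≥ 1`,
`F̂_n(ν k^{n−1}) = λ^{−n} A_ν (1 − exp(−2πiν/k))`; in particular
`|F̂_n(ν k^{n−1})| ≥ |λ|^{−n} |A_ν| / k`. -/
theorem F_coefficient_formula (k : ℕ) (hk : 2 ≤ k) (lam : ℂ) (hlam : lam ≠ 0)
    (A : ℕ → ℂ) (hA : ∀ m : ℕ, k ∣ m → A m = 0)
    (H : ℂ → ℂ) (hH : ∀ ζ : ℂ, ‖ζ‖ < 1 → HasSum (fun m : ℕ => A m * ζ ^ m) (H ζ))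
    (r : ℝ) (hr0 : 0 < r) (hr1 : r < 1)
    (B : ℕ → ℕ → ℂ)
    (hB : ∀ n : ℕ, ∀ ζ : ℂ, ‖ζ‖ < r →
      HasSum (fun s : ℕ => B n s * ζ ^ s) (Ffun H k lam n ζ)) :
    ∀ ν : ℕ, 1 ≤ ν → ¬ (k ∣ ν) → ∀ n : ℕ, 1 ≤ n →
      B n (ν * k ^ (n - 1)) =
        lam⁻¹ ^ n * A ν * (1 - Complex.exp (-2 * Real.pi * Complex.I * ν / k)) ∧
      (‖lam‖)⁻¹ ^ n * ‖A ν‖ / k ≤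
        ‖B n (ν * k ^ (n - 1))‖ :=
  F_coefficient_formula_general k hk lam A hA H hH r hr0 hr1 B hB
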